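/- Let K be an odd positive integer, ε > 0, m > 0 a real number, and let γ : {0,…,K} → [0,1] satisfy γ(l) = γ(K−l) for all l, γ(l) ≥ γ(l+1) for all 0 ≤ l ≤ (K−1)/2, γ(l) ≤ γ(l+1) for all (K+1)/2 ≤ l ≤ K−1, γ((K−1)/2) > 0, and γ((K+1)/2) > 0. Define f(p, p'; γ) = Σ_{l=0}^{(K−1)/2} ( e^{mε} b(l;K,p') − b(l;K,p) ) γ(l) + Σ_{l=(K+1)/2}^{K} ( b(l;K,p) − e^{mε} b(l;K,p') ) γ(l) on F(ε,0). Then every maximizer (p*, p'*) of f over F(ε,0) — i.e., every (p*, p'*) ∈ F(ε,0) such that f(p*, p'*; γ) ≥ f(p, p'; γ) for all (p, p') ∈ F(ε,0) — satisfies p* = e^{ε} p'* or 1 − p'* = e^{ε} (1 − p*). -/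

import Mathlib

open Finset

/-!
For fixed `p'`, the objective differs from the Bernstein polynomial `∑ₗ cₗ b(l;K,p)` only by a
function of `p'`, where `cₗ = -γ(l)` below the median and `cₗ = γ(l)` above it. The monotonicity
of `γ` on each half and the positivity of the two middle values make `c` nondecreasing with a
strict jump at `(K-1)/2`, so the derivative `K ∑ₗ (cₗ₊₁ - cₗ) b(l;K-1,p)` is positive on `(0,1)`
and the objective is strictly increasing in `p`. If neither `p* = e^ε p'*` nor
`1 - p'* = e^ε (1 - p*)` were tight, `p*` could be increased inside `F(ε,0)`.
-/

/-- Binomial(K,p) probability mass at `l`. -/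
noncomputable def binomPMF (K : ℕ) (p : ℝ) (l : ℕ) : ℝ :=
  (K.choose l : ℝ) * p ^ l * (1 - p) ^ (K - l)

/-- The feasible region `F(ε,0)`: pairs `(p,p') ∈ [0,1]²` consistent with pure
`ε`-differential privacy. -/
def Feas0 (ε p p' : ℝ) : Prop :=
  0 ≤ p ∧ p ≤ 1 ∧ 0 ≤ p' ∧ p' ≤ 1 ∧
  p ≤ Real.exp ε * p' ∧ p' ≤ Real.exp ε * p ∧
  1 - p ≤ Real.exp ε * (1 - p') ∧ 1 - p' ≤ Real.exp ε * (1 - p)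

/-- The i.i.d. privacy cost objective `f(p, p'; γ)`. -/
noncomputable def privCostIID (K : ℕ) (m ε : ℝ) (γ : ℕ → ℝ) (p p' : ℝ) : ℝ :=
  (∑ l ∈ Finset.range ((K + 1) / 2),
      (Real.exp (m * ε) * binomPMF K p' l - binomPMF K p l) * γ l)
  + ∑ l ∈ Finset.Icc ((K + 1) / 2) K,
      (binomPMF K p l - Real.exp (m * ε) * binomPMF K p' l) * γ l

lemma binomPMF_eq_eval_bernsteinPolynomial (n l : ℕ) (p : ℝ) :
    binomPMF n p l = (bernsteinPolynomial ℝ n l).eval p := by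
  simp [binomPMF, bernsteinPolynomial]

lemma hasDerivAt_binomPMF_succ (n l : ℕ) (p : ℝ) :
    HasDerivAt (fun x => binomPMF n x (l + 1))
      (n * (binomPMF (n - 1) p l - binomPMF (n - 1) p (l + 1))) p := by
  simpa [binomPMF_eq_eval_bernsteinPolynomial, bernsteinPolynomial.derivative_succ] using
    (bernsteinPolynomial ℝ n (l + 1)).hasDerivAt p

lemma hasDerivAt_binomPMF_zero (n : ℕ) (p : ℝ) :
    HasDerivAt (fun x => binomPMF n x 0) (-n * binomPMF (n - 1) p 0) p := by
  simpa [binomPMF_eq_eval_bernsteinPolynomial, bernsteinPolynomial.derivative_zero] using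
    (bernsteinPolynomial ℝ n 0).hasDerivAt p

lemma binomPMF_succ_self (n : ℕ) (p : ℝ) : binomPMF n p (n + 1) = 0 := by
  simp [binomPMF]

lemma hasDerivAt_sum_mul_binomPMF (n : ℕ) (c : ℕ → ℝ) (p : ℝ) :
    HasDerivAt (fun x => ∑ l ∈ range (n + 1 + 1), c l * binomPMF (n + 1) x l)
      ((n + 1) * ∑ j ∈ range (n + 1), (c (j + 1) - c j) * binomPMF n p j) p := by
  have hD := (HasDerivAt.fun_sum fun j (_ : j ∈ range (n + 1)) =>
    (hasDerivAt_binomPMF_succ (n + 1) j p).const_mul (c (j + 1))).add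
    ((hasDerivAt_binomPMF_zero (n + 1) p).const_mul (c 0))
  rw [show (fun x => ∑ l ∈ range (n + 1 + 1), c l * binomPMF (n + 1) x l)
      = fun x => ∑ j ∈ range (n + 1), c (j + 1) * binomPMF (n + 1) x (j + 1)
        + c 0 * binomPMF (n + 1) x 0 from funext fun x => sum_range_succ' _ _]
  refine hD.congr_deriv ?_
  have htelescope : ∑ j ∈ range (n + 1), c (j + 1) * binomPMF n p (j + 1) + c 0 * binomPMF n p 0
      = ∑ j ∈ range (n + 1), c j * binomPMF n p j := by
    rw [← sum_range_succ' (fun l => c l * binomPMF n p l), sum_range_succ, binomPMF_succ_self,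
      mul_zero, add_zero]
  have hsplit :
      ∑ j ∈ range (n + 1), c (j + 1) * ((n + 1 : ℕ) * (binomPMF n p j - binomPMF n p (j + 1)))
      = (n + 1) * (∑ j ∈ range (n + 1), c (j + 1) * binomPMF n p j
        - ∑ j ∈ range (n + 1), c (j + 1) * binomPMF n p (j + 1)) := by
    rw [← sum_sub_distrib, mul_sum]
    exact sum_congr rfl fun j _ => by push_cast; ring
  simp only [Nat.add_sub_cancel, hsplit, sub_mul, sum_sub_distrib]
  push_cast
  linear_combination -(n + 1 : ℝ) * htelescope

lemma binomPMF_pos {n j : ℕ} {p : ℝ} (hp : p ∈ Set.Ioo 0 1) (hj : j ≤ n) :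
    0 < binomPMF n p j := by
  have hC : (0 : ℝ) < n.choose j := by exact_mod_cast Nat.choose_pos hj
  exact mul_pos (mul_pos hC (pow_pos hp.1 j)) (pow_pos (sub_pos.2 hp.2) _)

lemma strictMonoOn_sum_mul_binomPMF (n : ℕ) (c : ℕ → ℝ) (hc : ∀ j ≤ n, c j ≤ c (j + 1))
    {j₀ : ℕ} (hj₀ : j₀ ≤ n) (hcj₀ : c j₀ < c (j₀ + 1)) :
    StrictMonoOn (fun x => ∑ l ∈ range (n + 1 + 1), c l * binomPMF (n + 1) x l)
      (Set.Icc 0 1) := by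
  apply strictMonoOn_of_deriv_pos (convex_Icc 0 1)
  · exact fun x _ => (hasDerivAt_sum_mul_binomPMF n c x).continuousAt.continuousWithinAt
  · intro x hx
    rw [interior_Icc] at hx
    rw [(hasDerivAt_sum_mul_binomPMF n c x).deriv]
    refine mul_pos (by positivity) (sum_pos' (fun j hj => ?_) ⟨j₀, ?_, ?_⟩)
    · have hj : j ≤ n := Nat.lt_succ_iff.1 (mem_range.1 hj)
      exact mul_nonneg (sub_nonneg.2 (hc j hj)) (binomPMF_pos hx hj).le
    · exact mem_range.2 (Nat.lt_succ_of_le hj₀)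
    · exact mul_pos (sub_pos.2 hcj₀) (binomPMF_pos hx hj₀)

def negBelow (k : ℕ) (γ : ℕ → ℝ) (l : ℕ) : ℝ :=
  if l < k then -γ l else γ l

lemma negBelow_le_succ {t n : ℕ} {γ : ℕ → ℝ} (h₁ : ∀ l < t, γ (l + 1) ≤ γ l)
    (h₂ : ∀ l, t + 1 ≤ l → l ≤ n → γ l ≤ γ (l + 1)) (hγt : 0 ≤ γ t) (hγt' : 0 ≤ γ (t + 1)) :
    ∀ j ≤ n, negBelow (t + 1) γ j ≤ negBelow (t + 1) γ (j + 1) := by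
  intro j hj
  unfold negBelow
  rcases lt_trichotomy j t with hjt | rfl | hjt
  · rw [if_pos (by omega), if_pos (by omega)]; linarith [h₁ j hjt]
  · rw [if_pos (by omega), if_neg (by omega)]; linarith
  · rw [if_neg (by omega), if_neg (by omega)]; exact h₂ j hjt hj

lemma privCostIID_sub_privCostIID (K : ℕ) (m ε : ℝ) (γ : ℕ → ℝ) (p q p' : ℝ) :
    privCostIID K m ε γ q p' - privCostIID K m ε γ p p'
      = ∑ l ∈ range (K + 1), negBelow ((K + 1) / 2) γ l * (binomPMF K q l - binomPMF K p l) := by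
  unfold privCostIID
  rw [← sum_range_add_sum_Ico _ (Nat.div_le_self (K + 1) 2), ← Ico_add_one_right_eq_Icc,
    add_sub_add_comm, ← sum_sub_distrib, ← sum_sub_distrib]
  congr 1 <;> refine sum_congr rfl fun l hl => ?_
  · rw [negBelow, if_pos (mem_range.1 hl)]; ring
  · rw [negBelow, if_neg (not_lt.2 (mem_Ico.1 hl).1)]; ring

lemma exists_feas0_fst_gt {ε p p' : ℝ} (hf : Feas0 ε p p')
    (h₁ : p < Real.exp ε * p') (h₂ : 1 - p' < Real.exp ε * (1 - p)) :
    ∃ q, p < q ∧ Feas0 ε q p' := by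
  obtain ⟨hp0, -, hp'0, hp'1, -, hp'p, hpp', -⟩ := hf
  have hE := Real.exp_pos ε
  set q := min (Real.exp ε * p') (1 - (1 - p') / Real.exp ε)
  have hpq : p < q := lt_min h₁ (by rw [lt_sub_comm, div_lt_iff₀' hE]; linarith)
  have hq₂ : (1 - p') / Real.exp ε ≤ 1 - q := le_sub_comm.1 (min_le_right _ _)
  have hq₁ : q ≤ 1 := by linarith [div_nonneg (sub_nonneg.2 hp'1) hE.le]
  refine ⟨q, hpq, by linarith, hq₁, hp'0, hp'1, min_le_left _ _, ?_, by linarith,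
    (div_le_iff₀' hE).1 hq₂⟩
  linarith [mul_le_mul_of_nonneg_left hpq.le hE.le]

theorem statement18_general (K : ℕ) (hK : Odd K)
    (ε m : ℝ) (γ : ℕ → ℝ)
    (hmono1 : ∀ l ≤ (K - 1) / 2, γ (l + 1) ≤ γ l)
    (hmono2 : ∀ l, (K + 1) / 2 ≤ l → l ≤ K - 1 → γ l ≤ γ (l + 1))
    (hpos1 : 0 < γ ((K - 1) / 2)) (hpos2 : 0 < γ ((K + 1) / 2))
    (pstar p'star : ℝ) (hfeas : Feas0 ε pstar p'star)
    (hmax : ∀ p p' : ℝ, Feas0 ε p p' →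
      privCostIID K m ε γ p p' ≤ privCostIID K m ε γ pstar p'star) :
    pstar = Real.exp ε * p'star ∨ 1 - p'star = Real.exp ε * (1 - pstar) := by
  obtain ⟨t, rfl⟩ := hK
  have hlow : (2 * t + 1 - 1) / 2 = t := by omega
  have hhigh : (2 * t + 1 + 1) / 2 = t + 1 := by omega
  rw [hlow] at hmono1 hpos1
  rw [hhigh] at hmono2 hpos2
  by_contra! hne
  obtain ⟨q, hpq, hq⟩ := exists_feas0_fst_gt hfeas (hfeas.2.2.2.2.1.lt_of_ne hne.1)
    (hfeas.2.2.2.2.2.2.2.lt_of_ne hne.2)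
  have hjump : negBelow (t + 1) γ t < negBelow (t + 1) γ (t + 1) := by
    simp only [negBelow, lt_add_one, if_true, lt_irrefl, if_false]; linarith
  have hincr := strictMonoOn_sum_mul_binomPMF (2 * t) (negBelow (t + 1) γ)
    (negBelow_le_succ (fun l hl => hmono1 l hl.le) (fun l hl hl' => hmono2 l hl (by omega))
      hpos1.le hpos2.le) (by omega) hjump ⟨hfeas.1, hfeas.2.1⟩ ⟨hq.1, hq.2.1⟩ hpq
  have hdiff := privCostIID_sub_privCostIID (2 * t + 1) m ε γ pstar q p'star
  rw [hhigh] at hdiff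
  simp only [mul_sub, sum_sub_distrib] at hdiff
  linarith [hmax q p'star hq]

/-- characterization of the worst-case probabilities: for a
symmetric, monotone noise function `γ` with strictly positive middle values,
every maximizer of the i.i.d. privacy cost objective over `F(ε,0)` lies on the
boundary `p* = e^ε p'*` or `1 − p'* = e^ε (1 − p*)`. -/
theorem statement18 (K : ℕ) (hK : Odd K) (hKpos : 0 < K)
    (ε m : ℝ) (hε : 0 < ε) (hm : 0 < m)
    (γ : ℕ → ℝ) (hγ01 : ∀ l ≤ K, 0 ≤ γ l ∧ γ l ≤ 1)
    (hsym : ∀ l ≤ K, γ l = γ (K - l))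
    (hmono1 : ∀ l ≤ (K - 1) / 2, γ (l + 1) ≤ γ l)
    (hmono2 : ∀ l, (K + 1) / 2 ≤ l → l ≤ K - 1 → γ l ≤ γ (l + 1))
    (hpos1 : 0 < γ ((K - 1) / 2)) (hpos2 : 0 < γ ((K + 1) / 2))
    (pstar p'star : ℝ) (hfeas : Feas0 ε pstar p'star)
    (hmax : ∀ p p' : ℝ, Feas0 ε p p' →
      privCostIID K m ε γ p p' ≤ privCostIID K m ε γ pstar p'star) :
    pstar = Real.exp ε * p'star ∨ 1 - p'star = Real.exp ε * (1 - pstar) :=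
  statement18_general K hK ε m γ hmono1 hmono2 hpos1 hpos2 pstar p'star hfeas hmax
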